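/- Let Cay(G,S) be a connected quintic Cayley graph on a finite abelian group with S = {s, -s, s', -s', s₀}, s₀ an involution, o(s), o(s') > 2, and let D be a perfect code. Then either (g + s + s' + s₀ ∈ D for all g ∈ D) or (g - s + s' + s₀ ∈ D for all g ∈ D). -/

import Mathlib

/-!
Write `a = s + s' + s₀` and `b = -s + s' + s₀`. Covering the vertices `d + s' + s₀`, `d ± s + s'`
and `d ± s + s₀` around a codeword `d` shows that `d + a` or `d + b` is a codeword; never both,
since `d + a - s = d + b + s`. If `d` and `d + a` are codewords, so are `d + 2a` and `d - a`, so
`v + ℤa ⊆ D` as soon as `v, v + a ∈ D`; likewise for `b`. If both alternatives fail, there are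
codewords `u`, `v` with `u + b, v + a ∈ D`. As `2s = a - b` and `s' = a - s - s₀`, the group is
`ℤa + ℤb + {0, s} + {0, s₀}`, so some `u + mb` and `v + na` cover a common vertex, hence coincide,
and this codeword `w` has both `w + a` and `w + b` in `D`.
-/

/-- The Cayley graph of an additive group `G` with connection set `S`. -/
def cayley (G : Type*) [AddGroup G] (S : Set G) : SimpleGraph G where
  Adj x y := x ≠ y ∧ (y - x ∈ S ∨ x - y ∈ S)
  symm := by
    constructor
    rintro x y ⟨h1, h2⟩
    exact ⟨h1.symm, h2.symm⟩
  loopless := by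
    constructor
    rintro x ⟨h1, -⟩
    exact h1 rfl

/-- A perfect code of a graph: every vertex is at distance at most one
from exactly one vertex of `D`. -/
def IsPerfectCode {V : Type*} (Γ : SimpleGraph V) (D : Set V) : Prop :=
  ∀ v : V, ∃! c : V, c ∈ D ∧ (v = c ∨ Γ.Adj v c)

/-- The generating relation of the graph `Γ_{m,l,h}`. -/
def gammaRel (m l h : ℕ) (p q : ZMod m × ZMod l) : Prop :=
  (q.1 = p.1 + 1 ∧ q.2 = p.2) ∨
  (q.1 = p.1 ∧ p.2.val ≠ l - 1 ∧ q.2 = p.2 + 1) ∨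
  (p.2.val = l - 1 ∧ q.1 = p.1 - (h : ZMod m) ∧ q.2 = 0)

/-- The graph `Γ_{m,l,h}` of Construction 2.1. -/
def Gamma (m l h : ℕ) : SimpleGraph (ZMod m × ZMod l) where
  Adj p q := p ≠ q ∧ (gammaRel m l h p q ∨ gammaRel m l h q p)
  symm := by
    constructor
    rintro p q ⟨h1, h2⟩
    exact ⟨h1.symm, h2.symm⟩
  loopless := by
    constructor
    rintro p ⟨h1, -⟩
    exact h1 rfl

/-- `tau n m` is the minimal positive divisor `j` of `m` with `gcd (n, m/j) = 1`. -/
noncomputable def tau (n m : ℕ) : ℕ := sInf {j : ℕ | 0 < j ∧ j ∣ m ∧ Nat.gcd n (m / j) = 1}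

/-- The graph `Γ'_{m,l,h}` of Construction 2.4. -/
def Gamma' (m l h : ℕ) : SimpleGraph (ZMod m × ZMod l) where
  Adj p q := p ≠ q ∧ (gammaRel m l h p q ∨ gammaRel m l h q p ∨
    (q.1 = p.1 + ((m / 2 : ℕ) : ZMod m) ∧ q.2 = p.2) ∨
    (p.1 = q.1 + ((m / 2 : ℕ) : ZMod m) ∧ p.2 = q.2))
  symm := by
    constructor
    rintro p q ⟨h1, h2⟩
    exact ⟨h1.symm, by tauto⟩
  loopless := by
    constructor
    rintro p ⟨h1, -⟩
    exact h1 rfl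

/-- The graph `Γ''_{m,l,h}` of Construction 2.7. -/
def Gamma'' (m l h : ℕ) : SimpleGraph (ZMod m × ZMod l) where
  Adj p q := p ≠ q ∧ (gammaRel m l h p q ∨ gammaRel m l h q p ∨
    (q.1 = p.1 + (((m + h - Nat.lcm h m : ℤ) / 2 : ℤ) : ZMod m) ∧
      p.2 = q.2 + ((l / 2 : ℕ) : ZMod l)) ∨
    (p.1 = q.1 + (((m + h - Nat.lcm h m : ℤ) / 2 : ℤ) : ZMod m) ∧
      q.2 = p.2 + ((l / 2 : ℕ) : ZMod l)))
  symm := by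
    constructor
    rintro p q ⟨h1, h2⟩
    exact ⟨h1.symm, by tauto⟩
  loopless := by
    constructor
    rintro p ⟨h1, -⟩
    exact h1 rfl

/-- `sigma2 n` is the 2-adic valuation of the natural number `n`. -/
def sigma2 (n : ℕ) : ℕ := padicValNat 2 n

/-- `sigma2Z n` is the 2-adic valuation of the integer `n`. -/
def sigma2Z (n : ℤ) : ℕ := padicValInt 2 n

section Cayley

variable {G : Type*} [AddCommGroup G] {S D : Set G}

theorem eq_or_cayley_adj_iff (hS : ∀ x ∈ S, -x ∈ S) {x y : G} :
    x = y ∨ (cayley G S).Adj x y ↔ x - y ∈ insert 0 S := by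
  have hsymm : y - x ∈ S ↔ x - y ∈ S :=
    ⟨fun h ↦ neg_sub y x ▸ hS _ h, fun h ↦ neg_sub x y ▸ hS _ h⟩
  simp only [cayley, hsymm, or_self, Set.mem_insert_iff, sub_eq_zero]
  tauto

namespace IsPerfectCode

theorem exists_sub_mem (hD : IsPerfectCode (cayley G S) D) (hS : ∀ x ∈ S, -x ∈ S) (v : G) :
    ∃ t ∈ insert 0 S, v - t ∈ D := by
  obtain ⟨c, ⟨hc, hvc⟩, -⟩ := hD v
  exact ⟨v - c, (eq_or_cayley_adj_iff hS).mp hvc, by rwa [sub_sub_cancel]⟩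

theorem eq_of_add_eq_add (hD : IsPerfectCode (cayley G S) D) (hS : ∀ x ∈ S, -x ∈ S)
    {c c' t t' : G} (hc : c ∈ D) (hc' : c' ∈ D) (ht : t ∈ insert 0 S) (ht' : t' ∈ insert 0 S)
    (h : c + t = c' + t') : c = c' :=
  (hD (c + t)).unique
    ⟨hc, (eq_or_cayley_adj_iff hS).mpr (by rwa [add_sub_cancel_left])⟩
    ⟨hc', (eq_or_cayley_adj_iff hS).mpr (by rwa [h, add_sub_cancel_left])⟩

end IsPerfectCode

end Cayley

theorem List.nodup_of_ncard_eq_length {α : Type*} {l : List α}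
    (h : {a | a ∈ l}.ncard = l.length) : l.Nodup := by
  classical
  rw [← List.coe_toFinset, Set.ncard_coe_finset] at h
  exact Multiset.toFinset_card_eq_card_iff_nodup.mp h

theorem exists_zsmul_add_zsmul_add_zsmul_eq {G : Type*} [AddCommGroup G] {a b c : G}
    (h : AddSubgroup.closure {a, -a, b, -b, c} = ⊤) (g : G) :
    ∃ p q r : ℤ, p • a + q • b + r • c = g := by
  have hle : AddSubgroup.closure {a, -a, b, -b, c} ≤ (Submodule.span ℤ {a, b, c}).toAddSubgroup := by
    have hsub : ({a, b, c} : Set G) ⊆ Submodule.span ℤ {a, b, c} := Submodule.subset_span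
    simp only [Set.insert_subset_iff, Set.singleton_subset_iff, SetLike.mem_coe] at hsub
    rw [AddSubgroup.closure_le]
    simp only [Set.insert_subset_iff, Set.singleton_subset_iff, Submodule.coe_toAddSubgroup,
      SetLike.mem_coe, neg_mem_iff]
    tauto
  exact Submodule.mem_span_triple.mp (hle (h ▸ AddSubgroup.mem_top g))

section Quintic

variable {G : Type*} [AddCommGroup G] {s s' s₀ : G} {D : Set G}

-- Stable under `s ↦ -s` and `s' ↦ -s'` (`neg_left`, `neg_right`), which halves the case analysis.
structure IsQuinticPerfectCode (s s' s₀ : G) (D : Set G) : Prop where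
  neg_s₀ : -s₀ = s₀
  nodup : [0, s, -s, s', -s', s₀].Nodup
  isPerfectCode : IsPerfectCode (cayley G {s, -s, s', -s', s₀}) D

namespace IsQuinticPerfectCode

theorem of_ncard_eq_five (h5 : ({s, -s, s', -s', s₀} : Set G).ncard = 5)
    (h0 : addOrderOf s₀ = 2) (hD : IsPerfectCode (cayley G {s, -s, s', -s', s₀}) D) :
    IsQuinticPerfectCode s s' s₀ D where
  neg_s₀ := by
    rw [neg_eq_iff_add_eq_zero, ← two_nsmul, ← h0, addOrderOf_nsmul_eq_zero]
  nodup := by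
    have hS : [s, -s, s', -s', s₀].Nodup :=
      List.nodup_of_ncard_eq_length (by convert h5 using 2 <;> simp [Set.ext_iff])
    have hs₀ : s₀ ≠ 0 := by rintro rfl; simp at h0
    simp only [List.nodup_cons, List.mem_cons, List.not_mem_nil] at hS ⊢
    grind
  isPerfectCode := hD

theorem neg_mem (h : IsQuinticPerfectCode s s' s₀ D) :
    ∀ x ∈ ({s, -s, s', -s', s₀} : Set G), -x ∈ ({s, -s, s', -s', s₀} : Set G) := by
  rintro x (rfl | rfl | rfl | rfl | rfl) <;> simp [h.neg_s₀]

theorem neg_left (h : IsQuinticPerfectCode s s' s₀ D) : IsQuinticPerfectCode (-s) s' s₀ D where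
  neg_s₀ := h.neg_s₀
  nodup := by
    rw [neg_neg]
    exact (List.Perm.cons _ (List.Perm.swap _ _ _)).nodup_iff.mp h.nodup
  isPerfectCode := by
    rw [neg_neg, Set.insert_comm]
    exact h.isPerfectCode

theorem neg_right (h : IsQuinticPerfectCode s s' s₀ D) : IsQuinticPerfectCode s (-s') s₀ D where
  neg_s₀ := h.neg_s₀
  nodup := by
    rw [neg_neg]
    exact (((List.Perm.swap _ _ _).cons _).cons _).cons _ |>.nodup_iff.mp h.nodup
  isPerfectCode := by
    rw [neg_neg, Set.insert_comm (-s') s']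
    exact h.isPerfectCode

theorem exists_sub_mem (h : IsQuinticPerfectCode s s' s₀ D) (v : G) :
    ∃ t ∈ ({0, s, -s, s', -s', s₀} : Set G), v - t ∈ D :=
  h.isPerfectCode.exists_sub_mem h.neg_mem v

theorem eq_of_add_eq_add (h : IsQuinticPerfectCode s s' s₀ D) {c c' t t' : G}
    (hc : c ∈ D) (hc' : c' ∈ D) (heq : c + t = c' + t')
    (ht : t ∈ ({0, s, -s, s', -s', s₀} : Set G) := by simp)
    (ht' : t' ∈ ({0, s, -s, s', -s', s₀} : Set G) := by simp) : c = c' :=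
  h.isPerfectCode.eq_of_add_eq_add h.neg_mem hc hc' ht ht' heq

theorem eq_right_of_add_eq_add (h : IsQuinticPerfectCode s s' s₀ D) {c c' t t' : G}
    (hc : c ∈ D) (hc' : c' ∈ D) (heq : c + t = c' + t')
    (ht : t ∈ ({0, s, -s, s', -s', s₀} : Set G) := by simp)
    (ht' : t' ∈ ({0, s, -s, s', -s', s₀} : Set G) := by simp) : t = t' := by
  rw [h.eq_of_add_eq_add hc hc' heq ht ht'] at heq
  exact add_left_cancel heq

variable {d : G}

/- In the next three lemmas every choice of the codeword `v - t` covering the vertex `v` but one is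
excluded by `ha`, `hb`, or because it and a known codeword cover a common vertex. -/
theorem add_s'_add_s'_add_s₀_mem (h : IsQuinticPerfectCode s s' s₀ D) (hd : d ∈ D)
    (ha : d + s + s' + s₀ ∉ D) (hb : d - s + s' + s₀ ∉ D) : d + s' + s' + s₀ ∈ D := by
  obtain ⟨t, ht, hc⟩ := h.exists_sub_mem (d + s' + s₀)
  rcases ht with rfl | rfl | rfl | rfl | rfl | rfl
  · simpa [h.eq_right_of_add_eq_add hc hd (t := -s') (t' := s₀) (by abel)] using h.nodup
  · exact (hb (by convert hc using 1; abel)).elim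
  · exact (ha (by convert hc using 1; abel)).elim
  · simpa [h.eq_right_of_add_eq_add hc hd (t := 0) (t' := s₀) (by abel)] using h.nodup
  · convert hc using 1; abel
  · simpa [h.eq_right_of_add_eq_add hc hd (t := 0) (t' := s') (by abel)] using h.nodup

theorem add_s_add_s_add_s'_mem (h : IsQuinticPerfectCode s s' s₀ D) (hd : d ∈ D)
    (ha : d + s + s' + s₀ ∉ D) (hb : d - s + s' + s₀ ∉ D) : d + s + s + s' ∈ D := by
  have h₁ := h.add_s'_add_s'_add_s₀_mem hd ha hb
  obtain ⟨t, ht, hc⟩ := h.exists_sub_mem (d + s + s')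
  rcases ht with rfl | rfl | rfl | rfl | rfl | rfl
  · simpa [h.eq_right_of_add_eq_add hc hd (t := -s') (t' := s) (by abel)] using h.nodup
  · simpa [h.eq_right_of_add_eq_add hc hd (t := 0) (t' := s') (by abel)] using h.nodup
  · convert hc using 1; abel
  · simpa [h.eq_right_of_add_eq_add hc hd (t := 0) (t' := s) (by abel)] using h.nodup
  · simpa [h.eq_right_of_add_eq_add hc h₁ (t := s₀) (t' := s) (by abel)] using h.nodup
  · exact (ha (by convert hc using 1; linear_combination (norm := module) -h.neg_s₀)).elim

theorem add_s_sub_s'_add_s₀_mem (h : IsQuinticPerfectCode s s' s₀ D) (hd : d ∈ D)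
    (ha : d + s + s' + s₀ ∉ D) (hb : d - s + s' + s₀ ∉ D) : d + s - s' + s₀ ∈ D := by
  have h₂ := h.add_s_add_s_add_s'_mem hd ha hb
  obtain ⟨t, ht, hc⟩ := h.exists_sub_mem (d + s + s₀)
  rcases ht with rfl | rfl | rfl | rfl | rfl | rfl
  · simpa [h.eq_right_of_add_eq_add hc hd (t := -s) (t' := s₀) (by abel)] using h.nodup
  · simpa [h.eq_right_of_add_eq_add hc hd (t := 0) (t' := s₀) (by abel)] using h.nodup
  · simpa [h.eq_right_of_add_eq_add hc h₂ (t := s') (t' := s₀) (by abel)] using h.nodup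
  · convert hc using 1; abel
  · exact (ha (by convert hc using 1; abel)).elim
  · simpa [h.eq_right_of_add_eq_add hc hd (t := 0) (t' := s) (by abel)] using h.nodup

theorem add_mem_or_sub_mem (h : IsQuinticPerfectCode s s' s₀ D) (hd : d ∈ D) :
    d + s + s' + s₀ ∈ D ∨ d - s + s' + s₀ ∈ D := by
  by_contra! hab
  obtain ⟨ha, hb⟩ := hab
  have hplus := h.add_s_sub_s'_add_s₀_mem hd ha hb
  have hminus := h.neg_left.add_s_sub_s'_add_s₀_mem hd (by rwa [← sub_eq_add_neg])
    (by rwa [sub_neg_eq_add])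
  simpa [h.eq_right_of_add_eq_add hplus hminus (t := -s) (t' := s) (by abel)] using h.nodup

theorem periodic (h : IsQuinticPerfectCode s s' s₀ D) :
    Function.Periodic (fun x ↦ x ∈ D ∧ x + s + s' + s₀ ∈ D) (s + s' + s₀) := by
  intro x
  simp only [← add_assoc]
  refine propext ⟨fun ⟨hy, hya⟩ ↦ ⟨?_, hy⟩, fun ⟨hx, hxa⟩ ↦ ⟨hxa, ?_⟩⟩
  · rcases h.neg_left.neg_right.add_mem_or_sub_mem hy with hc | hc
    · convert hc using 1
      linear_combination (norm := module) h.neg_s₀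
    · simpa [h.eq_right_of_add_eq_add hya hc (t := -s') (t' := s') (by abel)] using h.nodup
  · rcases h.add_mem_or_sub_mem hxa with hc | hc
    · exact hc
    · simpa [h.eq_right_of_add_eq_add hc hx (t := -s') (t' := s')
        (by linear_combination (norm := module) -h.neg_s₀)] using h.nodup

theorem sub_add_add_not_mem (h : IsQuinticPerfectCode s s' s₀ D) (ha : d + s + s' + s₀ ∈ D) :
    d - s + s' + s₀ ∉ D := fun hb ↦ by
  simpa [h.eq_right_of_add_eq_add ha hb (t := -s) (t' := s) (by abel)] using h.nodup

end IsQuinticPerfectCode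

theorem exists_add_zsmul_add_eq_zsmul_add (hs₀ : -s₀ = s₀)
    (hgen : AddSubgroup.closure {s, -s, s', -s', s₀} = ⊤) (g : G) :
    ∃ m n : ℤ, ∃ x ∈ ({0, s₀} : Set G), ∃ y ∈ ({0, s} : Set G),
      g + m • (-s + s' + s₀) + x = n • (s + s' + s₀) + y := by
  obtain ⟨p, q, r, rfl⟩ := exists_zsmul_add_zsmul_add_zsmul_eq hgen g
  -- `p•s + q•s' + r•s₀ + k•b = (k + q)•a + ε•s + (r - q)•s₀` where `p - q = 2k + ε`
  refine ⟨(p - q) / 2, (p - q) / 2 + q, ((r - q) % 2) • s₀, ?_, ((p - q) % 2) • s, ?_, ?_⟩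
  · rcases Int.emod_two_eq (r - q) with h | h <;> simp [h]
  · rcases Int.emod_two_eq (p - q) with h | h <;> simp [h]
  · have hp := Int.mul_ediv_add_emod (p - q) 2
    obtain ⟨j, hj⟩ : 2 ∣ r - q + (r - q) % 2 := by omega
    linear_combination (norm := module) -(hp • s) + hj • s₀ - j • hs₀

theorem IsQuinticPerfectCode.forall_add_mem_or_forall_sub_mem
    (h : IsQuinticPerfectCode s s' s₀ D) (hgen : AddSubgroup.closure {s, -s, s', -s', s₀} = ⊤) :
    (∀ g ∈ D, g + s + s' + s₀ ∈ D) ∨ (∀ g ∈ D, g - s + s' + s₀ ∈ D) := by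
  by_contra! hcon
  obtain ⟨⟨u, hu, hua⟩, v, hv, hvb⟩ := hcon
  have hub : u - s + s' + s₀ ∈ D := (h.add_mem_or_sub_mem hu).resolve_left hua
  have hva : v + s + s' + s₀ ∈ D := (h.add_mem_or_sub_mem hv).resolve_right hvb
  obtain ⟨m, n, x, hx, y, hy, hxy⟩ := exists_add_zsmul_add_eq_zsmul_add h.neg_s₀ hgen (u - v)
  have hU := (h.neg_left.periodic.zsmul m u).mpr ⟨hu, by rwa [← sub_eq_add_neg]⟩
  have hV := (h.periodic.zsmul n v).mpr ⟨hv, hva⟩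
  have hUV : u + m • (-s + s' + s₀) = v + n • (s + s' + s₀) :=
    h.eq_of_add_eq_add hU.1 hV.1 (t := x) (t' := y) (by linear_combination (norm := module) hxy)
      (by rcases hx with rfl | rfl <;> simp) (by rcases hy with rfl | rfl <;> simp)
  refine h.sub_add_add_not_mem hV.2 ?_
  rw [← hUV, sub_eq_add_neg]
  exact hU.2

end Quintic

theorem stmt4_general (G : Type*) [AddCommGroup G] (s s' s₀ : G)
    (h5 : ({s, -s, s', -s', s₀} : Set G).ncard = 5)
    (h0 : addOrderOf s₀ = 2)
    (hgen : AddSubgroup.closure ({s, -s, s', -s', s₀} : Set G) = ⊤)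
    (D : Set G)
    (hD : IsPerfectCode (cayley G ({s, -s, s', -s', s₀} : Set G)) D) :
    (∀ g ∈ D, g + s + s' + s₀ ∈ D) ∨ (∀ g ∈ D, g - s + s' + s₀ ∈ D) :=
  (IsQuinticPerfectCode.of_ncard_eq_five h5 h0 hD).forall_add_mem_or_forall_sub_mem hgen

theorem stmt4 (G : Type*) [AddCommGroup G] [Fintype G] (s s' s₀ : G)
    (h5 : ({s, -s, s', -s', s₀} : Set G).ncard = 5)
    (h0 : addOrderOf s₀ = 2) (hs : 2 < addOrderOf s) (hs' : 2 < addOrderOf s')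
    (hgen : AddSubgroup.closure ({s, -s, s', -s', s₀} : Set G) = ⊤)
    (D : Set G)
    (hD : IsPerfectCode (cayley G ({s, -s, s', -s', s₀} : Set G)) D) :
    (∀ g ∈ D, g + s + s' + s₀ ∈ D) ∨ (∀ g ∈ D, g - s + s' + s₀ ∈ D) :=
  stmt4_general G s s' s₀ h5 h0 hgen D hD
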